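/- For every α ∈ (0,1/2], c > 0, and u, v > 0, the function w ↦ 1/(c² + u^{2α} + u^{−2α} + v^{2α} + v^{−2α} + c(u^α + u^{−α})(v^α + v^{−α})), viewed as a function of w = v + 1/v ≥ 2 (for fixed u, c), is completely monotone; hence ρ(x) = 1/(c + x^α + x^{−α}) is hyperbolically completely monotone. -/

import Mathlib

/-- `f` is completely monotone on `s`. -/
def CompletelyMonotoneOn (f : ℝ → ℝ) (s : Set ℝ) : Prop :=
  ∀ n : ℕ, ∀ x ∈ s, 0 ≤ (-1 : ℝ) ^ n * iteratedDeriv n f x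

/-- `f` is hyperbolically completely monotone. -/
def HCM (f : ℝ → ℝ) : Prop :=
  ∀ u : ℝ, 0 < u → ∃ H : ℝ → ℝ, CompletelyMonotoneOn H (Set.Ici 2) ∧
    ∀ v : ℝ, 0 < v → f (u * v) * f (u / v) = H (v + 1 / v)

open Set Filter MeasureTheory

/-!
Put `w = v + 1/v`, so that `v^β + v^(-β) = S_β(w)`; the denominator is `K + b S_α(w) + S_{2α}(w)`
with `K > 0`, `b ≥ 0`. For `β = 1`, `S_1(w) = w`. For `0 < β < 1`, partial fractions in `r` give
`S_β'(w) = (β / C_β) ∫₀^∞ r^(β-1) / (w + r + 1/r) dr` with `C_β = ∫₀^∞ r^(β-1) / (r + 1) dr`, a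
positive mixture of the completely monotone functions `1 / (w + a)`. So the denominator has a
completely monotone derivative, and its reciprocal is completely monotone because
`(1/φ)' = -φ' (1/φ)²` and complete monotonicity is stable under sums and products. The HCM claim
then follows from `(c + X(uv)) (c + X(u/v)) = denominator`, where `X(y) = y^α + y^(-α)`.
-/

/-- `(-1)^k f^(k) ≥ 0` on `U` for all `k ≤ n`, each of these derivatives being differentiable
on `U`. -/
def CompletelyMonotoneUpTo : ℕ → (ℝ → ℝ) → Set ℝ → Prop
  | 0, f, U => ∀ x ∈ U, DifferentiableAt ℝ f x ∧ 0 ≤ f x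
  | n + 1, f, U => (∀ x ∈ U, DifferentiableAt ℝ f x ∧ 0 ≤ f x) ∧
      CompletelyMonotoneUpTo n (-deriv f) U

def HasCompletelyMonotoneDerivOn (f : ℝ → ℝ) (U : Set ℝ) : Prop :=
  (∀ x ∈ U, DifferentiableAt ℝ f x) ∧ ∀ n, CompletelyMonotoneUpTo n (deriv f) U

namespace CompletelyMonotoneUpTo

variable {n : ℕ} {f g : ℝ → ℝ} {U V : Set ℝ}

theorem differentiableAt_nonneg (h : CompletelyMonotoneUpTo n f U) :
    ∀ x ∈ U, DifferentiableAt ℝ f x ∧ 0 ≤ f x := by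
  cases n
  exacts [h, h.1]

theorem of_succ (h : CompletelyMonotoneUpTo (n + 1) f U) : CompletelyMonotoneUpTo n f U := by
  induction n generalizing f with
  | zero => exact h.1
  | succ n ih => exact ⟨h.1, ih h.2⟩

theorem mono (h : CompletelyMonotoneUpTo n f U) (hVU : V ⊆ U) :
    CompletelyMonotoneUpTo n f V := by
  induction n generalizing f with
  | zero => exact fun x hx => h x (hVU hx)
  | succ n ih => exact ⟨fun x hx => h.1 x (hVU hx), ih h.2⟩

theorem congr (hU : IsOpen U) (h : CompletelyMonotoneUpTo n f U) (hfg : EqOn f g U) :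
    CompletelyMonotoneUpTo n g U := by
  have base : ∀ {m : ℕ} {f g : ℝ → ℝ}, CompletelyMonotoneUpTo m f U → EqOn f g U →
      ∀ x ∈ U, DifferentiableAt ℝ g x ∧ 0 ≤ g x := fun h hfg x hx =>
    let ⟨hd, hnonneg⟩ := h.differentiableAt_nonneg x hx
    ⟨((hfg.eventuallyEq_of_mem (hU.mem_nhds hx)).differentiableAt_iff).1 hd, hfg hx ▸ hnonneg⟩
  induction n generalizing f g with
  | zero => exact base h hfg
  | succ n ih =>
    refine ⟨base h hfg, ih h.2 fun x hx => ?_⟩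
    simp [(hfg.eventuallyEq_of_mem (hU.mem_nhds hx)).deriv_eq]

theorem const {c : ℝ} (hc : 0 ≤ c) : CompletelyMonotoneUpTo n (fun _ => c) U := by
  induction n generalizing c with
  | zero => exact fun _ _ => ⟨differentiableAt_const c, hc⟩
  | succ n ih =>
    have hderiv : -deriv (fun _ : ℝ => c) = fun _ => 0 := by ext; simp
    exact ⟨fun _ _ => ⟨differentiableAt_const c, hc⟩, hderiv ▸ ih le_rfl⟩

theorem add (hU : IsOpen U) (hf : CompletelyMonotoneUpTo n f U)
    (hg : CompletelyMonotoneUpTo n g U) : CompletelyMonotoneUpTo n (f + g) U := by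
  have base : ∀ {m : ℕ} {f g : ℝ → ℝ}, CompletelyMonotoneUpTo m f U →
      CompletelyMonotoneUpTo m g U → ∀ x ∈ U, DifferentiableAt ℝ (f + g) x ∧ 0 ≤ (f + g) x :=
    fun hf hg x hx =>
      let ⟨hfd, hf0⟩ := hf.differentiableAt_nonneg x hx
      let ⟨hgd, hg0⟩ := hg.differentiableAt_nonneg x hx
      ⟨hfd.add hgd, add_nonneg hf0 hg0⟩
  induction n generalizing f g with
  | zero => exact base hf hg
  | succ n ih =>
    refine ⟨base hf hg, (ih hf.2 hg.2).congr hU fun x hx => ?_⟩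
    simp only [Pi.add_apply, Pi.neg_apply,
      deriv_add (hf.differentiableAt_nonneg x hx).1 (hg.differentiableAt_nonneg x hx).1]
    ring

theorem const_mul {c : ℝ} (hc : 0 ≤ c) (hf : CompletelyMonotoneUpTo n f U) :
    CompletelyMonotoneUpTo n (fun x => c * f x) U := by
  induction n generalizing f with
  | zero => exact fun x hx => ⟨(hf x hx).1.const_mul c, mul_nonneg hc (hf x hx).2⟩
  | succ n ih =>
    have hderiv : -deriv (fun x => c * f x) = fun x => c * (-deriv f) x := by
      rw [deriv_const_mul_field']; ext; simp
    exact ⟨fun x hx => ⟨(hf.1 x hx).1.const_mul c, mul_nonneg hc (hf.1 x hx).2⟩,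
      hderiv ▸ ih hf.2⟩

theorem mul (hU : IsOpen U) (hf : CompletelyMonotoneUpTo n f U)
    (hg : CompletelyMonotoneUpTo n g U) : CompletelyMonotoneUpTo n (f * g) U := by
  have base : ∀ {m : ℕ} {f g : ℝ → ℝ}, CompletelyMonotoneUpTo m f U →
      CompletelyMonotoneUpTo m g U → ∀ x ∈ U, DifferentiableAt ℝ (f * g) x ∧ 0 ≤ (f * g) x :=
    fun hf hg x hx =>
      let ⟨hfd, hf0⟩ := hf.differentiableAt_nonneg x hx
      let ⟨hgd, hg0⟩ := hg.differentiableAt_nonneg x hx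
      ⟨hfd.mul hgd, mul_nonneg hf0 hg0⟩
  induction n generalizing f g with
  | zero => exact base hf hg
  | succ n ih =>
    refine ⟨base hf hg, ((ih hf.2 hg.of_succ).add hU (ih hf.of_succ hg.2)).congr hU
      fun x hx => ?_⟩
    simp only [Pi.add_apply, Pi.neg_apply, Pi.mul_apply,
      deriv_mul (hf.differentiableAt_nonneg x hx).1 (hg.differentiableAt_nonneg x hx).1]
    ring

theorem inv (hU : IsOpen U) (hf : HasCompletelyMonotoneDerivOn f U) (hpos : ∀ x ∈ U, 0 < f x) :
    CompletelyMonotoneUpTo n f⁻¹ U := by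
  have base : ∀ x ∈ U, DifferentiableAt ℝ f⁻¹ x ∧ 0 ≤ f⁻¹ x := fun x hx =>
    ⟨(hf.1 x hx).inv (hpos x hx).ne', inv_nonneg.2 (hpos x hx).le⟩
  induction n with
  | zero => exact base
  | succ n ih =>
    refine ⟨base, ((hf.2 n).mul hU (ih.mul hU ih)).congr hU fun x hx => ?_⟩
    simp only [Pi.mul_apply, Pi.inv_apply, Pi.neg_apply, deriv_inv'' (hf.1 x hx) (hpos x hx).ne']
    field_simp

theorem neg_one_pow_mul_iteratedDeriv_nonneg (h : CompletelyMonotoneUpTo n f U) {x : ℝ}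
    (hx : x ∈ U) : 0 ≤ (-1) ^ n * iteratedDeriv n f x := by
  induction n generalizing f with
  | zero => simpa using (h.differentiableAt_nonneg x hx).2
  | succ n ih =>
    have := ih h.2
    rw [iteratedDeriv_neg] at this
    rw [iteratedDeriv_succ', pow_succ]
    linarith

end CompletelyMonotoneUpTo

theorem CompletelyMonotoneOn.of_completelyMonotoneUpTo {f : ℝ → ℝ} {s U : Set ℝ}
    (h : ∀ n, CompletelyMonotoneUpTo n f U) (hs : s ⊆ U) : CompletelyMonotoneOn f s :=
  fun n _ hx => (h n).neg_one_pow_mul_iteratedDeriv_nonneg (hs hx)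

namespace HasCompletelyMonotoneDerivOn

variable {f g : ℝ → ℝ} {U V s : Set ℝ}

theorem mono (hf : HasCompletelyMonotoneDerivOn f U) (hVU : V ⊆ U) :
    HasCompletelyMonotoneDerivOn f V :=
  ⟨fun x hx => hf.1 x (hVU hx), fun n => (hf.2 n).mono hVU⟩

theorem add (hU : IsOpen U) (hf : HasCompletelyMonotoneDerivOn f U)
    (hg : HasCompletelyMonotoneDerivOn g U) : HasCompletelyMonotoneDerivOn (f + g) U :=
  ⟨fun x hx => (hf.1 x hx).add (hg.1 x hx), fun n =>
    ((hf.2 n).add hU (hg.2 n)).congr hU fun x hx => (deriv_add (hf.1 x hx) (hg.1 x hx)).symm⟩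

theorem const_mul {c : ℝ} (hc : 0 ≤ c) (hf : HasCompletelyMonotoneDerivOn f U) :
    HasCompletelyMonotoneDerivOn (fun x => c * f x) U :=
  ⟨fun x hx => (hf.1 x hx).const_mul c, fun n => by
    rw [deriv_const_mul_field']; exact (hf.2 n).const_mul hc⟩

theorem const_add (c : ℝ) (hf : HasCompletelyMonotoneDerivOn f U) :
    HasCompletelyMonotoneDerivOn (fun x => c + f x) U :=
  ⟨fun x hx => (hf.1 x hx).const_add c, fun n => by
    rw [deriv_const_add']; exact hf.2 n⟩

/-- Positivity is needed only on `s`: it persists on an open neighbourhood of `s` in `U`. -/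
theorem completelyMonotoneOn_inv (hU : IsOpen U) (hf : HasCompletelyMonotoneDerivOn f U)
    (hs : s ⊆ U) (hpos : ∀ x ∈ s, 0 < f x) : CompletelyMonotoneOn f⁻¹ s := by
  have hV : IsOpen (U ∩ f ⁻¹' Ioi 0) := ContinuousOn.isOpen_inter_preimage
    (fun x hx => (hf.1 x hx).continuousAt.continuousWithinAt) hU isOpen_Ioi
  exact CompletelyMonotoneOn.of_completelyMonotoneUpTo
    (fun _ => CompletelyMonotoneUpTo.inv hV (hf.mono inter_subset_left) fun _ hx => hx.2)
    fun x hx => ⟨hs hx, hpos x hx⟩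

end HasCompletelyMonotoneDerivOn

theorem abs_div_add_pow_le {y a x δ : ℝ} (ha : 0 < a) (hδ : 0 < δ) (hx : δ ≤ x) (k : ℕ) :
    |y / (x + a) ^ (k + 1)| ≤ (δ ^ k)⁻¹ * |y / a| := by
  have hxa : 0 < x + a := by linarith
  rw [abs_div, abs_div, abs_of_pos (pow_pos hxa _), abs_of_pos ha, ← div_eq_inv_mul, div_div]
  gcongr
  calc a * δ ^ k ≤ (x + a) * (x + a) ^ k := by gcongr <;> linarith
    _ = _ := by ring

theorem hasDerivAt_div_add_pow (y a : ℝ) (n : ℕ) {x : ℝ} (hx : x + a ≠ 0) :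
    HasDerivAt (fun x => y / (x + a) ^ (n + 1)) (-(n + 1) * (y / (x + a) ^ (n + 1 + 1))) x := by
  refine ((hasDerivAt_const x y).fun_div (((hasDerivAt_id' x).add_const a).fun_pow (n + 1))
    (pow_ne_zero _ hx)).congr_deriv ?_
  rw [Nat.add_sub_cancel]
  field_simp
  push_cast
  ring

noncomputable section

variable {α : Type*} [MeasurableSpace α] (μ : Measure α) (w a : α → ℝ)

def stieltjesPow (n : ℕ) (x : ℝ) : ℝ := ∫ r, w r / (x + a r) ^ (n + 1) ∂μ

variable {μ w a} (ha0 : ∀ᵐ r ∂μ, 0 < a r)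
include ha0

theorem stieltjesPow_nonneg (hw0 : 0 ≤ᵐ[μ] w) (n : ℕ) {x : ℝ} (hx : 0 ≤ x) :
    0 ≤ stieltjesPow μ w a n x :=
  integral_nonneg_of_ae <| (hw0.and ha0).mono fun _ hr =>
    div_nonneg hr.1 (pow_nonneg (by linarith [hr.2]) _)

variable (hw : AEMeasurable w μ) (ha : AEMeasurable a μ)
  (hwa : Integrable (fun r => w r / a r) μ)
include hw ha hwa

theorem integrable_div_add_pow (k : ℕ) {x : ℝ} (hx : 0 < x) :
    Integrable (fun r => w r / (x + a r) ^ (k + 1)) μ :=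
  (hwa.norm.const_mul (x ^ k)⁻¹).mono'
    (hw.div ((ha.const_add x).pow_const _)).aestronglyMeasurable
    (ha0.mono fun _ hr => abs_div_add_pow_le hr hx le_rfl k)

theorem hasDerivAt_stieltjesPow (n : ℕ) {x₀ : ℝ} (hx₀ : 0 < x₀) :
    HasDerivAt (stieltjesPow μ w a n) (-(n + 1) * stieltjesPow μ w a (n + 1) x₀) x₀ := by
  have hball : ∀ x ∈ Metric.ball x₀ (x₀ / 2), x₀ / 2 ≤ x := fun x hx => by
    have := (abs_lt.1 (Real.dist_eq x x₀ ▸ Metric.mem_ball.1 hx)).1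
    linarith
  have key := hasDerivAt_integral_of_dominated_loc_of_deriv_le
    (F := fun x r => w r / (x + a r) ^ (n + 1))
    (F' := fun x r => -(n + 1) * (w r / (x + a r) ^ (n + 1 + 1)))
    (bound := fun r => (n + 1) * (((x₀ / 2) ^ (n + 1))⁻¹ * |w r / a r|))
    (Metric.ball_mem_nhds x₀ (half_pos hx₀))
    (Eventually.of_forall fun x =>
      (hw.div ((ha.const_add x).pow_const _)).aestronglyMeasurable)
    (integrable_div_add_pow ha0 hw ha hwa n hx₀)
    ((hw.div ((ha.const_add x₀).pow_const _)).const_mul _).aestronglyMeasurable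
    (ha0.mono fun r hr x hx => by
      rw [norm_mul, Real.norm_eq_abs, Real.norm_eq_abs, abs_neg, abs_of_nonneg (by positivity)]
      gcongr
      exact abs_div_add_pow_le hr (half_pos hx₀) (hball x hx) (n + 1))
    ((hwa.norm.const_mul _).const_mul _)
    (ha0.mono fun r hr x hx => hasDerivAt_div_add_pow (w r) (a r) n
      (by linarith [hball x hx, half_pos hx₀]))
  have hderiv := key.2
  rw [integral_const_mul] at hderiv
  exact hderiv

theorem completelyMonotoneUpTo_stieltjesPow (hw0 : 0 ≤ᵐ[μ] w) (n k : ℕ) :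
    CompletelyMonotoneUpTo n (stieltjesPow μ w a k) (Ioi 0) := by
  have base : ∀ k, ∀ x ∈ Ioi (0 : ℝ),
      DifferentiableAt ℝ (stieltjesPow μ w a k) x ∧ 0 ≤ stieltjesPow μ w a k x := fun k x hx =>
    ⟨(hasDerivAt_stieltjesPow ha0 hw ha hwa k hx).differentiableAt,
      stieltjesPow_nonneg ha0 hw0 k (le_of_lt hx)⟩
  induction n generalizing k with
  | zero => exact base k
  | succ n ih =>
    refine ⟨base k, ((ih (k + 1)).const_mul (by positivity : (0 : ℝ) ≤ k + 1)).congr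
      isOpen_Ioi fun x hx => ?_⟩
    simp only [Pi.neg_apply, (hasDerivAt_stieltjesPow ha0 hw ha hwa k hx).deriv]
    ring

end

noncomputable section

variable {β : ℝ}

theorem integrableOn_rpow_mul_of_abs_le (hβ : β ∈ Ioo 0 1) {f : ℝ → ℝ} {C : ℝ}
    (hf : ContinuousOn f (Ioi 0)) (h0 : ∀ t > 0, |f t| ≤ C) (htop : ∀ t > 0, |f t| ≤ C * t⁻¹) :
    IntegrableOn (fun t => t ^ (β - 1) * f t) (Ioi 0) :=
  mellin_convergent_of_isBigO_scalar (a := 1) (b := 0) (hf.locallyIntegrableOn measurableSet_Ioi)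
    (Asymptotics.IsBigO.of_bound C <| (eventually_gt_atTop 0).mono fun t ht => by
      simpa [Real.rpow_neg_one, abs_of_pos ht] using htop t ht) hβ.2
    (Asymptotics.IsBigO.of_bound C <| eventually_mem_nhdsWithin.mono fun t ht => by
      simpa using h0 t ht) hβ.1

theorem integrableOn_rpow_div_add (hβ : β ∈ Ioo 0 1) {s : ℝ} (hs : 0 < s) :
    IntegrableOn (fun r : ℝ => r ^ (β - 1) / (r + s)) (Ioi 0) := by
  simp_rw [div_eq_mul_inv]
  refine integrableOn_rpow_mul_of_abs_le hβ (C := max s⁻¹ 1)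
    (fun t ht => ((continuousAt_id.add continuousAt_const).inv₀ ?_).continuousWithinAt)
    (fun t ht => ?_) (fun t ht => ?_)
  · exact (add_pos (mem_Ioi.1 ht) hs).ne'
  · rw [abs_of_pos (by positivity)]
    exact (inv_anti₀ hs (by linarith)).trans (le_max_left _ _)
  · rw [abs_of_pos (by positivity)]
    exact (inv_anti₀ ht (by linarith)).trans
      (le_mul_of_one_le_left (by positivity) (le_max_right _ _))

theorem integrableOn_rpow_div_add_inv (hβ : β ∈ Ioo 0 1) :
    IntegrableOn (fun r : ℝ => r ^ (β - 1) / (r + r⁻¹)) (Ioi 0) := by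
  simp_rw [div_eq_mul_inv]
  refine integrableOn_rpow_mul_of_abs_le hβ (C := 1)
    (fun t ht => ((continuousAt_id.add (continuousAt_inv₀ ?_)).inv₀ ?_).continuousWithinAt)
    (fun t ht => ?_) (fun t ht => ?_)
  · exact (mem_Ioi.1 ht).ne'
  · exact (add_pos (mem_Ioi.1 ht) (inv_pos.2 (mem_Ioi.1 ht))).ne'
  · rw [abs_of_pos (by positivity)]
    refine inv_le_one_of_one_le₀ ?_
    nlinarith [mul_inv_cancel₀ ht.ne', sq_nonneg (t - t⁻¹), inv_pos.2 ht]
  · rw [abs_of_pos (by positivity), one_mul]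
    exact inv_anti₀ ht (le_add_of_nonneg_right (inv_nonneg.2 ht.le))

/-- `∫₀^∞ r^(β-1) / (x + r + 1/r)^(n+1) dr`; `S_β' = (β / C_β) powKernel β 0` in the notation of
the header. -/
def powKernel (β : ℝ) : ℕ → ℝ → ℝ :=
  stieltjesPow (volume.restrict (Ioi 0)) (fun r => r ^ (β - 1)) (fun r => r + r⁻¹)

theorem hasDerivAt_powKernel (hβ : β ∈ Ioo 0 1) (n : ℕ) {x : ℝ} (hx : 0 < x) :
    HasDerivAt (powKernel β n) (-(n + 1) * powKernel β (n + 1) x) x :=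
  hasDerivAt_stieltjesPow (ae_restrict_of_forall_mem measurableSet_Ioi fun r (hr : 0 < r) =>
      by positivity) (by fun_prop) (by fun_prop) (integrableOn_rpow_div_add_inv hβ) n hx

theorem powKernel_nonneg (β : ℝ) {x : ℝ} (hx : 0 ≤ x) : 0 ≤ powKernel β 0 x :=
  stieltjesPow_nonneg (ae_restrict_of_forall_mem measurableSet_Ioi fun r (hr : 0 < r) =>
      by positivity)
    (ae_restrict_of_forall_mem measurableSet_Ioi fun r (hr : 0 < r) => by positivity) 0 hx

theorem completelyMonotoneUpTo_powKernel (hβ : β ∈ Ioo 0 1) (n : ℕ) :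
    CompletelyMonotoneUpTo n (powKernel β 0) (Ioi 0) :=
  completelyMonotoneUpTo_stieltjesPow (ae_restrict_of_forall_mem measurableSet_Ioi
      fun r (hr : 0 < r) => by positivity) (by fun_prop) (by fun_prop)
    (integrableOn_rpow_div_add_inv hβ)
    (ae_restrict_of_forall_mem measurableSet_Ioi fun r (hr : 0 < r) => by positivity) n 0

/-- The constant `C_β` of the header (it equals `π / sin (π β)`). -/
def powKernelConst (β : ℝ) : ℝ := ∫ r in Ioi 0, r ^ (β - 1) / (r + 1)

theorem powKernelConst_nonneg (β : ℝ) : 0 ≤ powKernelConst β :=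
  setIntegral_nonneg measurableSet_Ioi fun r (hr : 0 < r) => by positivity

theorem powKernelConst_pos (hβ : β ∈ Ioo 0 1) : 0 < powKernelConst β := by
  rw [powKernelConst, setIntegral_pos_iff_support_of_nonneg_ae
    (ae_restrict_of_forall_mem measurableSet_Ioi fun r (hr : 0 < r) => by positivity)
    (integrableOn_rpow_div_add hβ one_pos)]
  refine lt_of_lt_of_le ?_ (measure_mono (μ := volume) (s := Ioi 0) fun r (hr : 0 < r) =>
    ⟨(by positivity : 0 < r ^ (β - 1) / (r + 1)).ne', hr⟩)
  simp

theorem integral_rpow_div_add (β : ℝ) {s : ℝ} (hs : 0 < s) :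
    ∫ r in Ioi 0, r ^ (β - 1) / (r + s) = s ^ (β - 1) * powKernelConst β := by
  have hscale := integral_comp_mul_left_Ioi (fun r => r ^ (β - 1) / (r + s)) 0 hs
  have hpt : ∀ t ∈ Ioi (0 : ℝ), (s * t) ^ (β - 1) / (s * t + s) =
      s⁻¹ * (s ^ (β - 1) * (t ^ (β - 1) / (t + 1))) := fun t (ht : 0 < t) => by
    rw [Real.mul_rpow hs.le ht.le]
    field_simp
  rw [setIntegral_congr_fun measurableSet_Ioi hpt, integral_const_mul, integral_const_mul,
    mul_zero, smul_eq_mul] at hscale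
  exact (mul_left_cancel₀ (inv_ne_zero hs.ne') hscale).symm

theorem sub_inv_mul_powKernel (hβ : β ∈ Ioo 0 1) {t : ℝ} (ht : 0 < t) :
    (t - t⁻¹) * powKernel β 0 (t + t⁻¹) = powKernelConst β * (t ^ β - t ^ (-β)) := by
  have hint : ∀ s > 0,
      Integrable (fun r : ℝ => r ^ (β - 1) / (r + s)) (volume.restrict (Ioi 0)) :=
    fun s hs => integrableOn_rpow_div_add hβ hs
  have hpartial : ∀ r > 0, (t - t⁻¹) * (r ^ (β - 1) / (t + t⁻¹ + (r + r⁻¹)) ^ (0 + 1)) =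
      t * (r ^ (β - 1) / (r + t)) - t⁻¹ * (r ^ (β - 1) / (r + t⁻¹)) := fun r hr => by
    have hfactor : t + t⁻¹ + (r + r⁻¹) = (r + t) * (r + t⁻¹) / r := by field_simp; ring
    have : r + t⁻¹ ≠ 0 := by positivity
    rw [hfactor, zero_add, pow_one]
    field_simp
    ring
  rw [powKernel, stieltjesPow, ← integral_const_mul,
    setIntegral_congr_fun measurableSet_Ioi hpartial,
    integral_sub ((hint t ht).const_mul t) ((hint t⁻¹ (inv_pos.2 ht)).const_mul t⁻¹),
    integral_const_mul, integral_const_mul, integral_rpow_div_add β ht,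
    integral_rpow_div_add β (inv_pos.2 ht), Real.inv_rpow ht.le, Real.rpow_sub_one ht.ne',
    Real.rpow_neg ht.le]
  field_simp

/-- The function `S_β` of the header, written as an integral so that it extends smoothly below
`w = 2`. -/
def powSum (β x : ℝ) : ℝ := 2 + β / powKernelConst β * ∫ y in (2 : ℝ)..x, powKernel β 0 y

theorem hasDerivAt_powSum (hβ : β ∈ Ioo 0 1) {x : ℝ} (hx : 0 < x) :
    HasDerivAt (powSum β) (β / powKernelConst β * powKernel β 0 x) x := by
  have hcont : ContinuousOn (powKernel β 0) (Ioi 0) := fun y hy =>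
    (hasDerivAt_powKernel hβ 0 hy).continuousAt.continuousWithinAt
  have hint : IntervalIntegrable (powKernel β 0) volume 2 x :=
    (hcont.mono fun y hy => lt_of_lt_of_le (lt_min two_pos hx) hy.1).intervalIntegrable
  exact ((intervalIntegral.integral_hasDerivAt_right hint
    (hcont.stronglyMeasurableAtFilter isOpen_Ioi x hx)
    (hcont.continuousAt (isOpen_Ioi.mem_nhds hx))).const_mul _).const_add 2

theorem powSum_add_inv (hβ : β ∈ Ioo 0 1) {v : ℝ} (hv : 0 < v) :
    powSum β (v + v⁻¹) = v ^ β + v ^ (-β) := by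
  have hderiv : ∀ t > 0,
      HasDerivAt (fun t => powSum β (t + t⁻¹) - (t ^ β + t ^ (-β))) 0 t := fun t ht => by
    have hM := (powKernelConst_pos hβ).ne'
    have hK := sub_inv_mul_powKernel hβ ht
    refine (((hasDerivAt_powSum hβ (x := t + t⁻¹) (by positivity)).comp t
      ((hasDerivAt_id' t).fun_add (hasDerivAt_inv ht.ne'))).fun_sub
      ((Real.hasDerivAt_rpow_const (p := β) (Or.inl ht.ne')).fun_add
        (Real.hasDerivAt_rpow_const (p := -β) (Or.inl ht.ne')))).congr_deriv ?_
    generalize powKernel β 0 (t + t⁻¹) = K at hK ⊢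
    rw [Real.rpow_sub_one ht.ne', Real.rpow_sub_one ht.ne']
    field_simp at hK ⊢
    linear_combination β * hK
  have hconst := isOpen_Ioi.is_const_of_deriv_eq_zero (convex_Ioi 0).isPreconnected
    (fun t ht => (hderiv t ht).differentiableAt.differentiableWithinAt)
    (fun t ht => (hderiv t ht).deriv) hv (mem_Ioi.2 one_pos)
  have hone : powSum β (1 + 1⁻¹) - (1 ^ β + 1 ^ (-β)) = 0 := by norm_num [powSum]
  linarith [hconst.trans hone]

theorem two_le_powSum (hβ : 0 ≤ β) {x : ℝ} (hx : 2 ≤ x) : 2 ≤ powSum β x := by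
  have hK : 0 ≤ ∫ y in (2 : ℝ)..x, powKernel β 0 y :=
    intervalIntegral.integral_nonneg hx fun y hy => powKernel_nonneg β (by linarith [hy.1])
  have := mul_nonneg (div_nonneg hβ (powKernelConst_nonneg β)) hK
  rw [powSum]
  linarith

theorem hasCompletelyMonotoneDerivOn_powSum (hβ : β ∈ Ioo 0 1) :
    HasCompletelyMonotoneDerivOn (powSum β) (Ioi 0) :=
  ⟨fun _ hx => (hasDerivAt_powSum hβ hx).differentiableAt, fun n =>
    ((completelyMonotoneUpTo_powKernel hβ n).const_mul
      (div_nonneg hβ.1.le (powKernelConst_pos hβ).le)).congr isOpen_Ioi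
      fun _ hx => (hasDerivAt_powSum hβ hx).deriv.symm⟩

theorem exists_hasCompletelyMonotoneDerivOn_rpow_add_rpow_neg (hβ : β ∈ Ioc 0 1) :
    ∃ S : ℝ → ℝ, HasCompletelyMonotoneDerivOn S (Ioi 0) ∧ (∀ x, 2 ≤ x → 0 ≤ S x) ∧
      ∀ v, 0 < v → S (v + v⁻¹) = v ^ β + v ^ (-β) := by
  rcases hβ.2.lt_or_eq with hβ1 | rfl
  · exact ⟨powSum β, hasCompletelyMonotoneDerivOn_powSum ⟨hβ.1, hβ1⟩,
      fun x hx => zero_le_two.trans (two_le_powSum hβ.1.le hx),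
      fun v hv => powSum_add_inv ⟨hβ.1, hβ1⟩ hv⟩
  · refine ⟨id, ⟨fun x _ => differentiableAt_id, fun n => ?_⟩, fun x hx => zero_le_two.trans hx,
      fun v _ => by simp [Real.rpow_neg_one]⟩
    rw [deriv_id']
    exact CompletelyMonotoneUpTo.const zero_le_one

end

theorem exists_completelyMonotoneOn_inv_rpow_add_rpow_neg {α K b : ℝ}
    (hα : α ∈ Ioc 0 (1 / 2)) (hK : 0 < K) (hb : 0 ≤ b) :
    ∃ H : ℝ → ℝ, CompletelyMonotoneOn H (Ici 2) ∧ ∀ v, 0 < v →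
      H (v + v⁻¹) = (K + (b * (v ^ α + v ^ (-α)) + (v ^ (2 * α) + v ^ (-(2 * α)))))⁻¹ := by
  obtain ⟨S₁, hS₁, hS₁_nonneg, hS₁_eq⟩ :=
    exists_hasCompletelyMonotoneDerivOn_rpow_add_rpow_neg (β := α) ⟨hα.1, by linarith [hα.2]⟩
  obtain ⟨S₂, hS₂, hS₂_nonneg, hS₂_eq⟩ :=
    exists_hasCompletelyMonotoneDerivOn_rpow_add_rpow_neg (β := 2 * α)
      ⟨by linarith [hα.1], by linarith [hα.2]⟩
  refine ⟨fun x => (K + (b * S₁ x + S₂ x))⁻¹, ?_,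
    fun v hv => by simp only [hS₁_eq v hv, hS₂_eq v hv]⟩
  refine (((hS₁.const_mul hb).add isOpen_Ioi hS₂).const_add K).completelyMonotoneOn_inv
    isOpen_Ioi (fun x (hx : 2 ≤ x) => zero_lt_two.trans_le hx) fun x (hx : 2 ≤ x) => ?_
  have := hS₁_nonneg x hx
  have := hS₂_nonneg x hx
  show 0 < K + (b * S₁ x + S₂ x)
  positivity

theorem exists_completelyMonotoneOn_eq_one_div {α c u : ℝ} (hα : α ∈ Ioc 0 (1 / 2))
    (hc : 0 ≤ c) (hu : 0 < u) :
    ∃ H : ℝ → ℝ, CompletelyMonotoneOn H (Ici 2) ∧ ∀ v : ℝ, 0 < v →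
      1 / (c ^ 2 + u ^ (2 * α) + u ^ (-(2 * α)) + v ^ (2 * α) + v ^ (-(2 * α)) +
        c * (u ^ α + u ^ (-α)) * (v ^ α + v ^ (-α))) = H (v + 1 / v) := by
  obtain ⟨H, hH, hH_eq⟩ := exists_completelyMonotoneOn_inv_rpow_add_rpow_neg hα
    (K := c ^ 2 + u ^ (2 * α) + u ^ (-(2 * α))) (by positivity)
    (b := c * (u ^ α + u ^ (-α))) (by positivity)
  refine ⟨H, hH, fun v hv => ?_⟩
  rw [one_div v, hH_eq v hv, one_div]
  congr 1
  ring

theorem add_rpow_add_rpow_neg_mul {u v : ℝ} (hu : 0 < u) (hv : 0 < v) (c α : ℝ) :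
    (c + (u * v) ^ α + (u * v) ^ (-α)) * (c + (u / v) ^ α + (u / v) ^ (-α)) =
      c ^ 2 + u ^ (2 * α) + u ^ (-(2 * α)) + v ^ (2 * α) + v ^ (-(2 * α)) +
        c * (u ^ α + u ^ (-α)) * (v ^ α + v ^ (-α)) := by
  have hsq : ∀ {y : ℝ}, 0 < y → y ^ (2 * α) = (y ^ α) ^ 2 := fun hy => by
    rw [mul_comm, Real.rpow_mul hy.le, Real.rpow_two]
  simp only [Real.mul_rpow hu.le hv.le, Real.div_rpow hu.le hv.le, Real.rpow_neg hu.le,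
    Real.rpow_neg hv.le, hsq hu, hsq hv]
  have := (Real.rpow_pos_of_pos hu α).ne'
  have := (Real.rpow_pos_of_pos hv α).ne'
  field_simp
  ring

theorem rho_HCM (α : ℝ) (hα : α ∈ Set.Ioc (0:ℝ) (1/2)) (c : ℝ) (hc : 0 < c) :
    (∀ u : ℝ, 0 < u → ∃ H : ℝ → ℝ, CompletelyMonotoneOn H (Set.Ici 2) ∧
      ∀ v : ℝ, 0 < v →
        1 / (c ^ 2 + u ^ (2 * α) + u ^ (-(2 * α)) + v ^ (2 * α) + v ^ (-(2 * α)) +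
              c * (u ^ α + u ^ (-α)) * (v ^ α + v ^ (-α))) = H (v + 1 / v)) ∧
    HCM (fun x : ℝ => 1 / (c + x ^ α + x ^ (-α))) := by
  have hCM := fun u (hu : 0 < u) => exists_completelyMonotoneOn_eq_one_div hα hc.le hu
  refine ⟨hCM, fun u hu => ?_⟩
  obtain ⟨H, hH, hH_eq⟩ := hCM u hu
  exact ⟨H, hH, fun v hv => by
    rw [← hH_eq v hv, div_mul_div_comm, one_mul, add_rpow_add_rpow_neg_mul hu hv]⟩
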